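/- Let G be a flat pregeometry on M, let A = (M,R) be a hypergraph representation of G, and let F be a finite closed subset of G. Then α_G(F) equals the number of edges r ∈ R with cl_G(r) = F. -/

import Mathlib

open scoped Classical

/-- A combinatorial pregeometry (matroid) on the ground type `α`, given by a
dimension (rank) function on finite subsets. -/
structure Pregeometry (α : Type*) [DecidableEq α] where
  dim : Finset α → ℕ
  dim_empty : dim ∅ = 0
  dim_le_insert : ∀ (A : Finset α) (x : α), dim A ≤ dim (insert x A)
  insert_le_dim : ∀ (A : Finset α) (x : α), dim (insert x A) ≤ dim A + 1
  submodular : ∀ A B : Finset α, dim (A ∪ B) + dim (A ∩ B) ≤ dim A + dim B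

namespace Pregeometry

variable {α : Type*} [DecidableEq α] (G : Pregeometry α)

/-- Closure of an arbitrary subset. -/
def cl (Y : Set α) : Set α :=
  {x | ∃ A : Finset α, ↑A ⊆ Y ∧ G.dim (insert x A) = G.dim A}

/-- `Y` is closed (in the ambient pregeometry `G`). -/
def IsClosed (Y : Set α) : Prop := G.cl Y = Y

/-- `X` is a closed set of the subpregeometry of `G` induced on `P`
(whose closure operator is `Y ↦ cl Y ∩ P`). -/
def IsClosedIn (P X : Set α) : Prop := X ⊆ P ∧ G.cl X ∩ P = X

/-- Dimension of an arbitrary subset, with value `⊤` when infinite-dimensional. -/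
noncomputable def edim (Y : Set α) : ℕ∞ :=
  ⨆ (A : Finset α) (_ : ↑A ⊆ Y), (G.dim A : ℕ∞)

/-- The (natural number) dimension of a finite-dimensional subset. -/
noncomputable def sdim (Y : Set α) : ℕ := (G.edim Y).toNat

/-- The alternating inclusion–exclusion sum
`Δ_G(Σ) = Σ_{∅ ≠ S ⊆ Σ} (-1)^{|S|+1} d(⋂ S)` of a finite collection of sets. -/
noncomputable def flatSum (Sig : Finset (Set α)) : ℤ :=
  ∑ S ∈ Sig.powerset.filter (· ≠ ∅),
    (-1) ^ (S.card + 1) * (G.sdim (⋂₀ ↑S) : ℤ)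

/-- `P ⊑* Q`: for the subpregeometries induced on `P ⊆ Q`, the dimension of the
intersection of two closed sets of `P` equals the dimension of the intersection
of their closures in `Q` (the closure of `X` in `Q` being `cl X ∩ Q`). -/
def SqStar (P Q : Set α) : Prop := P ⊆ Q ∧
  ∀ X₁ X₂ : Set α, G.IsClosedIn P X₁ → G.IsClosedIn P X₂ →
    G.edim (X₁ ∩ X₂) = G.edim (G.cl X₁ ∩ G.cl X₂ ∩ Q)

/-- `P ⊑ Q`: `P` is strongly embedded in `Q`: for every finite collection `Σ` of
finite-dimensional closed sets of `Q`, `Δ_P(Σ_P) ≤ Δ_Q(Σ)` where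
`Σ_P = {E ∩ P : E ∈ Σ}`. -/
def Sq (P Q : Set α) : Prop := P ⊆ Q ∧
  ∀ Sig : Finset (Set α), (∀ E ∈ Sig, G.IsClosedIn Q E) →
    (∀ E ∈ Sig, G.edim E ≠ ⊤) →
    G.flatSum (Sig.image (· ∩ P)) ≤ G.flatSum Sig

/-- The subpregeometry induced on `P` is flat: every finite collection of
finite-dimensional closed sets satisfies `d(⋃ Σ) ≤ Δ(Σ)`. -/
def FlatIn (P : Set α) : Prop :=
  ∀ Sig : Finset (Set α), (∀ E ∈ Sig, G.IsClosedIn P E) →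
    (∀ E ∈ Sig, G.edim E ≠ ⊤) →
    (G.sdim (⋃₀ ↑Sig) : ℤ) ≤ G.flatSum Sig

/-- The α-function of the subpregeometry of `G` induced on `P`:
`α(X) = |X| − d(X) − Σ_{Y ⊊ X closed} α(Y)`. -/
noncomputable def alphaIn (P : Set α) (X : Finset α) : ℤ :=
  (X.card : ℤ) - (G.dim X : ℤ) -
    ∑ Y ∈ (X.powerset.filter fun Y => Y ≠ X ∧ G.IsClosedIn P ↑Y).attach,
      alphaIn P Y.1
termination_by X.card
decreasing_by
  have h := Y.2
  simp only [Finset.mem_filter, Finset.mem_powerset] at h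
  exact Finset.card_lt_card (lt_of_le_of_ne h.1 h.2.1)

end Pregeometry

/-- A hypergraph on the vertex type `α`: a set of nonempty finite edges. -/
structure HGraph (α : Type*) where
  edges : Set (Finset α)
  nonempty_edges : ∀ e ∈ edges, e ≠ ∅

namespace HGraph

variable {α : Type*} [DecidableEq α] (A : HGraph α)

/-- The set of edges contained in a set of vertices. -/
def edgesIn (P : Set α) : Set (Finset α) := {e | e ∈ A.edges ∧ ↑e ⊆ P}

/-- The predimension `δ(P) = |P| − |R[P]|` of a finite set of vertices. -/
noncomputable def delta (P : Finset α) : ℤ :=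
  (P.card : ℤ) - (A.edgesIn ↑P).ncard

/-- The relative predimension `δ(L/P) = |L∖P| − |R[L∪P]∖R[P]|`. -/
noncomputable def deltaRel (L : Finset α) (P : Set α) : ℤ :=
  ((↑L \ P : Set α).ncard : ℤ) -
    ({e | e ∈ A.edges ∧ ↑e ⊆ ↑L ∪ P ∧ ¬ ↑e ⊆ P} : Set (Finset α)).ncard

/-- `P` is self-sufficient in `A`: `δ(X/P) ≥ 0` for every finite `X`, stated so
as to be meaningful even when infinitely many edges are involved. -/
def SelfSuff (P : Set α) : Prop :=
  ∀ X : Finset α, ∀ Es : Finset (Finset α),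
    (∀ e ∈ Es, e ∈ A.edges ∧ ↑e ⊆ ↑X ∪ P ∧ ¬ ↑e ⊆ P) →
    (Es.card : ℤ) ≤ ((↑X \ P : Set α).ncard : ℤ)

/-- The dimension function associated to a hypergraph:
`d(X) = inf {δ(B) : X ⊆ B finite}`. -/
noncomputable def hdim (X : Finset α) : ℤ :=
  sInf {d : ℤ | ∃ B : Finset α, X ⊆ B ∧ d = A.delta B}

/-- The induced subhypergraph on a set `P` of vertices (keeping `α` as the
ambient vertex type). -/
def restrict (P : Set α) : HGraph α :=
  ⟨{e | e ∈ A.edges ∧ ↑e ⊆ P}, fun e he => A.nonempty_edges e he.1⟩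

/-- A pregeometry `G` is represented by the hypergraph `A` if the associated
dimension function of `A` is the dimension function of `G`. -/
def Represents (G : Pregeometry α) : Prop :=
  ∀ X : Finset α, (G.dim X : ℤ) = A.hdim X

end HGraph
/-!
For a closed finite `F`, the infimum defining `d(F)` is attained at `F` itself: a finite
`B ⊇ F` with `δ(B) = d(F)` has `d(F) ≤ d(B) ≤ δ(B) = d(F)`, so `B ⊆ cl F = F`. Hence
`|F| − d(F) = |R[F]|`. Sorting the edges inside `F` by their closures, which are closed
subsets of `F`, writes `|R[F]|` as `Σ_{Y ⊆ F closed} #{r : cl r = Y}`; this is the recursion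
defining `α`, so `α(F) = #{r : cl r = F}` by induction on `F`.
-/

namespace Pregeometry

variable {α : Type*} [DecidableEq α] (G : Pregeometry α)

lemma dim_mono {A B : Finset α} (h : A ⊆ B) : G.dim A ≤ G.dim B := by
  rw [← Finset.union_sdiff_of_subset h]
  induction B \ A using Finset.induction_on with
  | empty => rw [Finset.union_empty]
  | insert a s _ ih => exact Finset.union_insert a A s ▸ ih.trans (G.dim_le_insert _ a)

lemma dim_insert_of_subset {a : α} {C D : Finset α}
    (hC : G.dim (insert a C) = G.dim C) (hCD : C ⊆ D) :
    G.dim (insert a D) = G.dim D := by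
  by_cases ha : a ∈ D
  · rw [Finset.insert_eq_self.mpr ha]
  · have hsub := G.submodular (insert a C) D
    rw [Finset.insert_union, Finset.union_eq_right.mpr hCD,
      Finset.insert_inter_of_notMem ha, Finset.inter_eq_left.mpr hCD, hC] at hsub
    have := G.dim_le_insert D a
    omega

lemma dim_union_eq_of_forall_dim_insert {A B : Finset α}
    (h : ∀ a ∈ A, G.dim (insert a B) = G.dim B) : G.dim (B ∪ A) = G.dim B := by
  induction A using Finset.induction_on with
  | empty => rw [Finset.union_empty]
  | @insert a s _ ih =>
    rw [Finset.forall_mem_insert] at h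
    rw [Finset.union_insert,
      G.dim_insert_of_subset h.1 (D := B ∪ s) Finset.subset_union_left, ih h.2]

lemma subset_cl (Y : Set α) : Y ⊆ G.cl Y := fun x hx =>
  ⟨{x}, by simpa using hx, by rw [Finset.insert_eq_self.mpr (Finset.mem_singleton_self x)]⟩

lemma cl_mono {Y Z : Set α} (h : Y ⊆ Z) : G.cl Y ⊆ G.cl Z := by
  rintro x ⟨A, hA, hd⟩
  exact ⟨A, hA.trans h, hd⟩

lemma cl_subset_of_isClosed {Y F : Set α} (hF : G.IsClosed F) (h : Y ⊆ F) : G.cl Y ⊆ F :=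
  hF ▸ G.cl_mono h

lemma isClosed_cl (Y : Set α) : G.IsClosed (G.cl Y) := by
  refine Set.Subset.antisymm ?_ (G.subset_cl _)
  rintro x ⟨A, hA, hx⟩
  have hA' : ∀ a ∈ A, ∃ C : Finset α, ↑C ⊆ Y ∧ G.dim (insert a C) = G.dim C :=
    fun a ha => hA ha
  choose! W hWY hW using hA'
  set B := A.biUnion W
  have hBY : (↑B : Set α) ⊆ Y := by
    simpa [B, Set.iUnion_subset_iff] using hWY
  have hAB : G.dim (B ∪ A) = G.dim B := G.dim_union_eq_of_forall_dim_insert fun a ha =>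
    G.dim_insert_of_subset (hW a ha) (Finset.subset_biUnion_of_mem W ha)
  have hxBA : G.dim (insert x (B ∪ A)) = G.dim (B ∪ A) :=
    G.dim_insert_of_subset hx Finset.subset_union_right
  have : G.dim (insert x B) ≤ G.dim (insert x (B ∪ A)) :=
    G.dim_mono (Finset.insert_subset_insert x Finset.subset_union_left)
  exact ⟨B, hBY, le_antisymm (by omega) (G.dim_le_insert B x)⟩

lemma subset_cl_of_dim_eq {F B : Finset α} (hFB : F ⊆ B) (hd : G.dim B = G.dim F) :
    (↑B : Set α) ⊆ G.cl ↑F := fun x hx =>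
  ⟨F, subset_rfl, le_antisymm (hd ▸ G.dim_mono (Finset.insert_subset hx hFB))
    (G.dim_le_insert F x)⟩

lemma isClosedIn_univ_iff {Y : Set α} : G.IsClosedIn Set.univ Y ↔ G.IsClosed Y := by
  simp [IsClosedIn, IsClosed]

lemma alphaIn_eq_of_sum_eq {P : Set α} (β : Finset α → ℤ)
    (hβ : ∀ F : Finset α, G.IsClosedIn P ↑F →
      ∑ Y ∈ F.powerset.filter (fun Y : Finset α => G.IsClosedIn P ↑Y), β Y =
        F.card - G.dim F)
    (F : Finset α) (hF : G.IsClosedIn P ↑F) : G.alphaIn P F = β F := by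
  induction F using Finset.strongInduction with
  | _ F ih =>
  set closedSubsets := F.powerset.filter fun Y : Finset α => G.IsClosedIn P ↑Y
  have hproper : F.powerset.filter (fun Y => Y ≠ F ∧ G.IsClosedIn P ↑Y) =
      closedSubsets.erase F := by
    ext Y
    simp only [closedSubsets, Finset.mem_filter, Finset.mem_erase]
    tauto
  have hF_mem : F ∈ closedSubsets :=
    Finset.mem_filter.mpr ⟨Finset.mem_powerset_self F, hF⟩
  rw [alphaIn, Finset.sum_attach _ (G.alphaIn P), hproper, ← hβ F hF,
    ← Finset.add_sum_erase _ _ hF_mem]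
  have hrec : ∀ Y ∈ closedSubsets.erase F, G.alphaIn P Y = β Y := by
    intro Y hY
    simp only [closedSubsets, Finset.mem_erase, Finset.mem_filter, Finset.mem_powerset] at hY
    exact ih Y (Finset.ssubset_iff_subset_ne.mpr ⟨hY.2.1, hY.1⟩) hY.2.2
  rw [Finset.sum_congr rfl hrec]
  ring

end Pregeometry

namespace HGraph

variable {α : Type*} (A : HGraph α)

def supsetDeltas (X : Finset α) : Set ℤ := {d | ∃ B : Finset α, X ⊆ B ∧ d = A.delta B}

lemma hdim_eq_sInf_supsetDeltas (X : Finset α) :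
    A.hdim X = sInf (A.supsetDeltas X) := rfl

lemma edgesIn_mono {P Q : Set α} (h : P ⊆ Q) : A.edgesIn P ⊆ A.edgesIn Q :=
  fun _ he => ⟨he.1, he.2.trans h⟩

lemma edgesIn_finite (F : Finset α) : (A.edgesIn ↑F).Finite :=
  F.powerset.finite_toSet.subset fun _ he => by simpa using he.2

lemma delta_union_le [DecidableEq α] (X B : Finset α) :
    A.delta (X ∪ B) ≤ A.delta B + X.card := by
  have hcard : (X ∪ B).card ≤ B.card + X.card :=
    Finset.union_comm X B ▸ Finset.card_union_le B X
  have hedges : (A.edgesIn ↑B).ncard ≤ (A.edgesIn ↑(X ∪ B)).ncard :=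
    Set.ncard_le_ncard (A.edgesIn_mono (by simp)) (A.edgesIn_finite _)
  unfold delta
  omega

lemma bddBelow_supsetDeltas_of_bddBelow [DecidableEq α] {X : Finset α}
    (hX : BddBelow (A.supsetDeltas X)) (F : Finset α) : BddBelow (A.supsetDeltas F) := by
  obtain ⟨b, hb⟩ := hX
  refine ⟨b - X.card, ?_⟩
  rintro _ ⟨B, -, rfl⟩
  have := hb ⟨X ∪ B, Finset.subset_union_left, rfl⟩
  have := A.delta_union_le X B
  omega

lemma bddBelow_supsetDeltas [Finite α] (X : Finset α) : BddBelow (A.supsetDeltas X) := by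
  refine ⟨-(Nat.card (Finset α) : ℤ), ?_⟩
  rintro _ ⟨B, -, rfl⟩
  have := Set.ncard_le_card (A.edgesIn ↑B)
  unfold delta
  omega

lemma bddBelow_supsetDeltas_of_represents [DecidableEq α] {G : Pregeometry α}
    (hrep : A.Represents G) {F : Finset α} (hF : G.IsClosed ↑F) :
    BddBelow (A.supsetDeltas F) := by
  by_contra hunb
  -- Otherwise every `hdim X` is the junk value `sInf` of an unbounded set, namely `0`.
  have hdim_zero : ∀ X : Finset α, G.dim X = 0 := fun X => by
    have hX := hrep X
    rw [hdim_eq_sInf_supsetDeltas, Int.csInf_of_not_bddBelow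
      (mt (fun h => A.bddBelow_supsetDeltas_of_bddBelow h F) hunb)] at hX
    exact_mod_cast hX
  have hF_univ : Set.univ ⊆ (↑F : Set α) := fun x _ => by
    have := G.subset_cl_of_dim_eq (Finset.subset_insert x F) (by rw [hdim_zero, hdim_zero])
    exact hF.subset (this (Finset.mem_insert_self x F))
  have : Finite α := Set.finite_univ_iff.mp (F.finite_toSet.subset hF_univ)
  exact hunb (A.bddBelow_supsetDeltas F)

lemma dim_le_delta [DecidableEq α] {G : Pregeometry α} (hrep : A.Represents G) {X : Finset α}
    (hX : BddBelow (A.supsetDeltas X)) : (G.dim X : ℤ) ≤ A.delta X := by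
  rw [hrep X, hdim_eq_sInf_supsetDeltas]
  exact csInf_le hX ⟨X, subset_rfl, rfl⟩

lemma delta_eq_dim_of_isClosed [DecidableEq α] {G : Pregeometry α} (hrep : A.Represents G)
    {F : Finset α} (hF : G.IsClosed ↑F) : A.delta F = G.dim F := by
  have hbdd := A.bddBelow_supsetDeltas_of_represents hrep hF
  obtain ⟨B, hFB, hB⟩ :=
    Int.csInf_mem (s := A.supsetDeltas F) ⟨A.delta F, F, subset_rfl, rfl⟩ hbdd
  have hdimF : (G.dim F : ℤ) = A.delta B := by rw [hrep F, hdim_eq_sInf_supsetDeltas, hB]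
  have hdimB := A.dim_le_delta hrep (A.bddBelow_supsetDeltas_of_bddBelow hbdd B)
  have := G.dim_mono hFB
  have hBF : B ⊆ F := by
    rw [← Finset.coe_subset, ← hF]
    exact G.subset_cl_of_dim_eq hFB (by omega)
  rw [Finset.Subset.antisymm hBF hFB] at hdimF
  exact hdimF.symm

lemma ncard_edgesIn_eq_sum_ncard_cl_eq [DecidableEq α] {G : Pregeometry α} {F : Finset α}
    (hF : G.IsClosed ↑F) :
    (A.edgesIn ↑F).ncard = ∑ Y ∈ F.powerset.filter (fun Y : Finset α => G.IsClosed ↑Y),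
      {r | r ∈ A.edges ∧ G.cl ↑r = ↑Y}.ncard := by
  set closedSubsets := F.powerset.filter (fun Y : Finset α => G.IsClosed ↑Y)
  set s := F.powerset.filter (· ∈ A.edges)
  set clF : Finset α → Finset α := fun r => F.filter (· ∈ G.cl ↑r)
  have hcl_sub : ∀ r ∈ s, G.cl ↑r ⊆ ↑F := fun r hr =>
    G.cl_subset_of_isClosed hF (by simpa using (Finset.mem_filter.mp hr).1)
  have hcoe_clF : ∀ r ∈ s, (↑(clF r) : Set α) = G.cl ↑r := fun r hr => by
    rw [Finset.coe_filter]
    exact Set.sep_eq_of_subset (hcl_sub r hr)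
  have hmaps : ∀ r ∈ s, clF r ∈ closedSubsets := fun r hr =>
    Finset.mem_filter.mpr ⟨Finset.mem_powerset.mpr (Finset.filter_subset _ F),
      (hcoe_clF r hr).symm ▸ G.isClosed_cl _⟩
  have hfiber : ∀ Y ∈ closedSubsets,
      {r | r ∈ A.edges ∧ G.cl ↑r = ↑Y} = ↑(s.filter (clF · = Y)) := by
    intro Y hY
    ext r
    simp only [Set.mem_ofPred_eq, Finset.coe_filter]
    constructor
    · rintro ⟨hr, hclr⟩
      have hrF : r ⊆ F := by
        rw [← Finset.coe_subset]
        exact (G.subset_cl _).trans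
          (hclr ▸ Finset.coe_subset.mpr (Finset.mem_powerset.mp (Finset.mem_filter.mp hY).1))
      have hrs : r ∈ s := Finset.mem_filter.mpr ⟨Finset.mem_powerset.mpr hrF, hr⟩
      exact ⟨hrs, Finset.coe_injective ((hcoe_clF r hrs).trans hclr)⟩
    · rintro ⟨hrs, rfl⟩
      exact ⟨(Finset.mem_filter.mp hrs).2, (hcoe_clF r hrs).symm⟩
  have hedges : A.edgesIn ↑F = ↑s := by
    ext r
    simp [s, edgesIn, and_comm]
  rw [hedges, Set.ncard_coe_finset, Finset.card_eq_sum_card_fiberwise hmaps]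
  exact Finset.sum_congr rfl fun Y hY => by rw [hfiber Y hY, Set.ncard_coe_finset]

end HGraph

theorem alpha_counts_edges_general {α : Type*} [DecidableEq α] (A : HGraph α)
    (G : Pregeometry α) (hrep : A.Represents G)
    (F : Finset α) (hF : G.IsClosed ↑F) :
    G.alphaIn Set.univ F =
      ({r | r ∈ A.edges ∧ G.cl ↑r = ↑F} : Set (Finset α)).ncard := by
  refine G.alphaIn_eq_of_sum_eq (fun Y => {r | r ∈ A.edges ∧ G.cl ↑r = ↑Y}.ncard)
    (fun E hE => ?_) F (G.isClosedIn_univ_iff.mpr hF)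
  simp only [G.isClosedIn_univ_iff] at hE ⊢
  rw [← Nat.cast_sum, ← A.ncard_edgesIn_eq_sum_ncard_cl_eq hE,
    ← A.delta_eq_dim_of_isClosed hrep hE, HGraph.delta]
  ring

/-- for `A` a hypergraph representation of a flat pregeometry `G`
and `F` a finite closed subset of `G`, `α_G(F)` is the number of edges `r` of
`A` with `cl_G(r) = F`. -/
theorem alpha_counts_edges {α : Type*} [DecidableEq α] (A : HGraph α)
    (G : Pregeometry α) (hrep : A.Represents G) (hflat : G.FlatIn Set.univ)
    (F : Finset α) (hF : G.IsClosed ↑F) :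
    G.alphaIn Set.univ F =
      ({r | r ∈ A.edges ∧ G.cl ↑r = ↑F} : Set (Finset α)).ncard :=
  alpha_counts_edges_general A G hrep F hF
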